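/- For α ∈ {1, −1}, define f_α(x,y) = (x² + y² − 3)·x·(x + α)·(x² − 4). Then: (i) f_α(β,β) ≥ 0 for every β ∈ ℤ; (ii) f_α(β, β^τ) = 0 for every β ∈ A with β ≠ α (where β^τ = β for integer β, and β^τ is the ℚ(√5)-conjugate for β ∈ {±φ, ±φ^τ}); and (iii) f_α(α, α) = 6 > 0. -/
import Mathlib


noncomputable def phi : ℝ := (1 + Real.sqrt 5) / 2
noncomputable def phiTau : ℝ := (1 - Real.sqrt 5) / 2

/-- The conjugate pairs `(α, α^τ)` for `α ∈ A = {0, ±1, ±2, ±φ, ±φ^τ}`, where `τ` fixes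
the integers and swaps `φ ↔ φ^τ`. -/
noncomputable def conjPairs : Set (ℝ × ℝ) :=
  {(0, 0), (1, 1), (-1, -1), (2, 2), (-2, -2),
    (phi, phiTau), (-phi, -phiTau), (phiTau, phi), (-phiTau, -phi)}

/-- `f_α(x,y) = (x² + y² - 3)·x·(x + α)·(x² - 4)` for `α = ±1`. -/
def fpm1 (α x y : ℝ) : ℝ := (x ^ 2 + y ^ 2 - 3) * x * (x + α) * (x ^ 2 - 4)

lemma fpm1_int_key (a b : ℤ) (ha : a = 1 ∨ a = -1) :
    0 ≤ (b ^ 2 + b ^ 2 - 3) * b * (b + a) * (b ^ 2 - 4) := by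
  have h2 : 0 ≤ b * (b + a) := by
    rcases ha with rfl | rfl
    · rcases le_or_gt 0 b with h | h
      · positivity
      · have := mul_nonneg (show (0:ℤ) ≤ -b by omega) (show (0:ℤ) ≤ -(b+1) by omega)
        nlinarith
    · rcases le_or_gt 1 b with h | h
      · exact mul_nonneg (by omega) (by omega)
      · have := mul_nonneg (show (0:ℤ) ≤ -b by omega) (show (0:ℤ) ≤ -(b+(-1)) by omega)
        nlinarith
  have h3 : 0 ≤ (b ^ 2 + b ^ 2 - 3) * (b ^ 2 - 4) := by
    have hcase : b ≤ -2 ∨ (-1 ≤ b ∧ b ≤ 1) ∨ 2 ≤ b := by omega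
    rcases hcase with h | ⟨h1, h1'⟩ | h
    · have hb2 : 4 ≤ b ^ 2 := by nlinarith [sq_nonneg (b + 2)]
      exact mul_nonneg (by linarith) (by linarith)
    · have hb2 : b ^ 2 ≤ 1 := by nlinarith
      have := mul_nonneg (show (0:ℤ) ≤ 3 - 2 * b ^ 2 by linarith)
        (show (0:ℤ) ≤ 4 - b ^ 2 by linarith)
      nlinarith
    · have hb2 : 4 ≤ b ^ 2 := by nlinarith [sq_nonneg (b - 2)]
      exact mul_nonneg (by linarith) (by linarith)
  nlinarith [mul_nonneg h3 h2]

lemma phi_sq_add : phi ^ 2 + phiTau ^ 2 = 3 := by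
  have h5 : Real.sqrt 5 ^ 2 = 5 := Real.sq_sqrt (by norm_num)
  unfold phi phiTau
  nlinarith [h5]

/-- For `α ∈ {1, -1}`: (i) `f_α(β,β) ≥ 0` for all `β ∈ ℤ`; (ii) `f_α(β,β^τ) = 0` for all
`β ∈ A` with `β ≠ α`; (iii) `f_α(α,α) = 6 > 0`. -/
theorem fpm1_properties (α : ℝ) (hα : α = 1 ∨ α = -1) :
    (∀ β : ℤ, 0 ≤ fpm1 α (β : ℝ) (β : ℝ)) ∧
    (∀ p ∈ conjPairs, p.1 ≠ α → fpm1 α p.1 p.2 = 0) ∧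
    (fpm1 α α α = 6 ∧ (0 : ℝ) < 6) := by
  refine ⟨?_, ?_, ?_, by norm_num⟩
  · intro β
    obtain ⟨a, rfl, ha⟩ : ∃ a : ℤ, α = (a : ℝ) ∧ (a = 1 ∨ a = -1) := by
      rcases hα with rfl | rfl
      exacts [⟨1, by norm_num⟩, ⟨-1, by norm_num⟩]
    have key := fpm1_int_key a β ha
    have hcast : ((((β:ℤ) ^ 2 + β ^ 2 - 3) * β * (β + a) * (β ^ 2 - 4) : ℤ) : ℝ)
        = fpm1 (a : ℝ) (β : ℝ) (β : ℝ) := by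
      push_cast [fpm1]; ring
    rw [← hcast]
    exact_mod_cast key
  · intro p hp hne
    have hsum := phi_sq_add
    simp only [conjPairs, Set.mem_insert_iff, Set.mem_singleton_iff] at hp
    rcases hp with rfl | rfl | rfl | rfl | rfl | rfl | rfl | rfl | rfl
    · simp [fpm1]
    · rcases hα with rfl | rfl
      · exact absurd rfl hne
      · norm_num [fpm1]
    · rcases hα with rfl | rfl
      · norm_num [fpm1]
      · exact absurd rfl hne
    · norm_num [fpm1]
    · norm_num [fpm1]
    · simp only [fpm1]
      linear_combination (phi * (phi + α) * (phi ^ 2 - 4)) * hsum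
    · simp only [fpm1]
      linear_combination (-phi * (-phi + α) * (phi ^ 2 - 4)) * hsum
    · simp only [fpm1]
      linear_combination (phiTau * (phiTau + α) * (phiTau ^ 2 - 4)) * hsum
    · simp only [fpm1]
      linear_combination (-phiTau * (-phiTau + α) * (phiTau ^ 2 - 4)) * hsum
  · rcases hα with rfl | rfl <;> norm_num [fpm1]
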